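/- Define B_n^{(-k)} := ∑_{m=0}^{min(n,k)} m! · S(n+1, m+1) · m! · S(k+1, m+1) for n, k ≥ 0. Then for all n ≥ 0 and k ≥ 0, B_n^{(-(k+1))} = B_n^{(-k)} + ∑_{m=1}^{n} C(n, m) · B_{n−m+1}^{(-k)}, where C(n, m) is the binomial coefficient. -/

import Mathlib

open Finset

/-- The Stirling numbers of the second kind. -/
def stirling : ℕ → ℕ → ℕ
  | 0, 0 => 1
  | 0, _ + 1 => 0
  | _ + 1, 0 => 0
  | n + 1, k + 1 => stirling n k + (k + 1) * stirling n (k + 1)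

/-- The poly-Bernoulli number with negative upper index,
`B_n^{(-k)} = ∑_{m=0}^{min(n,k)} m! S(n+1,m+1) m! S(k+1,m+1)`. -/
def polyBernoulli (n k : ℕ) : ℕ :=
  ∑ m ∈ Finset.range (min n k + 1),
    m.factorial * stirling (n + 1) (m + 1) * m.factorial * stirling (k + 1) (m + 1)

/-!
Both sides are combinations `∑ m, m!² S(k+1,m+1) · c_m` over `m ≤ n`. On the left,
`S(k+2,m+1) = S(k+1,m) + (m+1) S(k+1,m+1)` followed by a shift of `m` gives
`c_m = (m+1) S(n+1,m+1) + (m+1)² S(n+1,m+2)`. On the right,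
`c_m = S(n+1,m+1) + ∑_{j<n} C(n,j) S(j+2,m+1)`, and the two agree by the binomial identity
`∑_i C(n,i) S(i,r) = S(n+1,r+1)` together with the triangular recurrence.
-/

theorem stirling_eq_stirlingSecond : ∀ n k, stirling n k = Nat.stirlingSecond n k
  | 0, 0 | 0, _ + 1 | _ + 1, 0 => rfl
  | n + 1, k + 1 => by
    rw [stirling, Nat.stirlingSecond_succ_succ, stirling_eq_stirlingSecond n k,
      stirling_eq_stirlingSecond n (k + 1), add_comm]

theorem stirling_succ_succ (n k : ℕ) :
    stirling (n + 1) (k + 1) = stirling n k + (k + 1) * stirling n (k + 1) := rfl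

theorem stirling_succ_zero (n : ℕ) : stirling (n + 1) 0 = 0 := rfl

theorem stirling_eq_zero_of_lt {n k : ℕ} (h : n < k) : stirling n k = 0 := by
  rw [stirling_eq_stirlingSecond, Nat.stirlingSecond_eq_zero_of_lt h]

theorem sum_mul_stirling_succ_succ {ι : Type*} (s : Finset ι) (w g : ι → ℕ) (r : ℕ) :
    ∑ i ∈ s, w i * stirling (g i + 1) (r + 1)
      = ∑ i ∈ s, w i * stirling (g i) r
        + (r + 1) * ∑ i ∈ s, w i * stirling (g i) (r + 1) := by
  rw [mul_sum, ← sum_add_distrib]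
  refine sum_congr rfl fun i _ => ?_
  rw [stirling_succ_succ]
  ring

theorem sum_range_choose_mul_stirling (n r : ℕ) :
    ∑ i ∈ range (n + 1), n.choose i * stirling i r = stirling (n + 1) (r + 1) := by
  induction n generalizing r with
  | zero => cases r <;> rfl
  | succ n ih =>
    have pascal := Finset.sum_choose_succ_mul (R := ℕ) (fun i _ => stirling i r) n
    simp only [Nat.cast_id] at pascal
    rw [pascal, ih]
    cases r with
    | zero => simp [stirling_succ_zero, stirling_succ_succ]
    | succ r =>
      rw [sum_mul_stirling_succ_succ _ _ (fun i => i), ih, ih, stirling_succ_succ (n + 1) (r + 1)]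
      ring

theorem sum_range_choose_mul_stirling_succ (n r : ℕ) :
    ∑ i ∈ range (n + 1), n.choose i * stirling (i + 1) r
      = stirling (n + 1) r + r * stirling (n + 1) (r + 1) := by
  cases r with
  | zero => simp [stirling_succ_zero]
  | succ r =>
    rw [sum_mul_stirling_succ_succ _ _ (fun i => i), sum_range_choose_mul_stirling,
      sum_range_choose_mul_stirling]

theorem stirling_add_sum_range_choose_mul_stirling_add_two (n m : ℕ) :
    stirling (n + 1) (m + 1) + ∑ j ∈ range n, n.choose j * stirling (j + 1 + 1) (m + 1)
      = (m + 1) * stirling (n + 1) (m + 1) + (m + 1) ^ 2 * stirling (n + 1) (m + 2) := by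
  have full := sum_mul_stirling_succ_succ (range (n + 1)) n.choose (· + 1) m
  rw [sum_range_choose_mul_stirling_succ, sum_range_choose_mul_stirling_succ, sum_range_succ,
    Nat.choose_self, stirling_succ_succ (n + 1) m] at full
  linarith

theorem sum_Icc_choose_mul_sub {M : Type*} [AddCommMonoid M] (f : ℕ → M) (n : ℕ) :
    ∑ i ∈ Icc 1 n, n.choose i • f (n - i) = ∑ j ∈ range n, n.choose j • f j := by
  refine sum_nbij' (n - ·) (n - ·) ?_ ?_ ?_ ?_
    fun i hi => by rw [Nat.choose_symm (mem_Icc.mp hi).2]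
  all_goals intro i hi; simp only [mem_Icc, mem_range] at hi ⊢; omega

theorem polyBernoulli_eq_sum_range (n k : ℕ) {N : ℕ} (h : min n k ≤ N) :
    polyBernoulli n k = ∑ m ∈ range (N + 1),
      m.factorial * stirling (n + 1) (m + 1) * m.factorial * stirling (k + 1) (m + 1) := by
  refine sum_subset (range_subset_range.mpr (by omega)) fun m _ hm => ?_
  rcases le_or_gt m n with hmn | hmn
  · rw [stirling_eq_zero_of_lt (n := k + 1) (by rw [mem_range] at hm; omega), mul_zero]
  · rw [stirling_eq_zero_of_lt (n := n + 1) (by omega), mul_zero, zero_mul, zero_mul]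

theorem polyBernoulli_succ_right (n k : ℕ) :
    polyBernoulli n (k + 1) = ∑ m ∈ range (n + 1),
      m.factorial * m.factorial * stirling (k + 1) (m + 1) *
        ((m + 1) * stirling (n + 1) (m + 1) + (m + 1) ^ 2 * stirling (n + 1) (m + 2)) := by
  rw [polyBernoulli_eq_sum_range n (k + 1) (N := n + 1) (by omega)]
  simp only [stirling_succ_succ (k + 1), mul_add, sum_add_distrib]
  rw [sum_range_succ', sum_range_succ (M := ℕ) _ (n + 1),
    stirling_succ_zero, stirling_eq_zero_of_lt (n := n + 1) (k := n + 1 + 1) (by omega)]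
  simp only [mul_zero, zero_mul, add_zero, ← sum_add_distrib]
  refine sum_congr rfl fun m _ => ?_
  rw [Nat.factorial_succ]
  ring

theorem polyBernoulli_add_sum_Icc_choose_mul (n k : ℕ) :
    polyBernoulli n k + ∑ i ∈ Icc 1 n, n.choose i * polyBernoulli (n - i + 1) k
      = ∑ m ∈ range (n + 1), m.factorial * m.factorial * stirling (k + 1) (m + 1) *
          (stirling (n + 1) (m + 1)
            + ∑ j ∈ range n, n.choose j * stirling (j + 1 + 1) (m + 1)) := by
  have reflect := sum_Icc_choose_mul_sub (fun j => polyBernoulli (j + 1) k) n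
  simp only [smul_eq_mul] at reflect
  have expand : ∀ j ∈ range n, n.choose j * polyBernoulli (j + 1) k
      = ∑ m ∈ range (n + 1), n.choose j *
          (m.factorial * stirling (j + 1 + 1) (m + 1) * m.factorial * stirling (k + 1) (m + 1)) :=
    fun j hj => by
      rw [polyBernoulli_eq_sum_range (j + 1) k (N := n) (by rw [mem_range] at hj; omega), mul_sum]
  rw [reflect, sum_congr rfl expand, polyBernoulli_eq_sum_range n k (N := n) (by omega),
    sum_comm, ← sum_add_distrib]
  refine sum_congr rfl fun m _ => ?_
  rw [mul_add, mul_sum]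
  congr 1
  · ring
  · exact sum_congr rfl fun j _ => by ring

/-- The recurrence `B_n^{(-(k+1))} = B_n^{(-k)} + ∑_{m=1}^n C(n,m) B_{n-(m-1)}^{(-k)}`. -/
theorem polyBernoulli_rec (n k : ℕ) :
    polyBernoulli n (k + 1)
      = polyBernoulli n k
        + ∑ m ∈ Finset.Icc 1 n, n.choose m * polyBernoulli (n - m + 1) k := by
  rw [polyBernoulli_add_sum_Icc_choose_mul, polyBernoulli_succ_right]
  refine sum_congr rfl fun m _ => ?_
  rw [stirling_add_sum_range_choose_mul_stirling_add_two]
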